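/- arXiv:1508.04732 — 5 statements merged into one kernel-verified Lean document; each statement's English description precedes it below -/
import Mathlib

section
/- For each even n ≥ 0, the element θₙ⁽⁰⁾ = Σ_{i=0}^{n} (-1)ⁱ xᵢ x_{n-i} of the infinite polynomial ring Ω lies in the kernel of the down operator Δ, and θₙ⁽⁰⁾ ≠ 0. -/
open MvPolynomial

/-- The down operator `Δ` on `Ω = k[x₀, x₁, x₂, ...]`. -/
noncomputable def downOp (k : Type*) [Field k] [CharZero k] :
    Derivation k (MvPolynomial ℕ k) (MvPolynomial ℕ k) :=
  MvPolynomial.mkDerivation k (fun n => if n = 0 then 0 else X (n - 1))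

/-- `θₙ⁽⁰⁾ = Σ_{i=0}^{n} (-1)ⁱ xᵢ x_{n-i}`. -/
noncomputable def theta0 (k : Type*) [Field k] [CharZero k] (n : ℕ) : MvPolynomial ℕ k :=
  ∑ i ∈ Finset.range (n + 1), (-1 : MvPolynomial ℕ k) ^ i * X i * X (n - i)

/-!
Writing `θₙ = Σ_{i+j=n} (-1)ⁱ xᵢ xⱼ`, the Leibniz rule splits `Δθₙ` into the two sums
`Σ (-1)ⁱ x_{i-1} xⱼ` and `Σ (-1)ⁱ xᵢ x_{j-1}`, both running over `i + j = n` with `x₋₁ = 0`.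
Reindexed over `i + j = n - 1`, they are `∓ Σ (-1)ⁱ xᵢ xⱼ`, so they cancel.
For `n = 2m`, evaluating at `x_m = 1` and `xᵢ = 0` for `i ≠ m` leaves only the middle term
`(-1)ᵐ`, so `θₙ ≠ 0`.
-/

section

open Finset

variable {k : Type*} [Field k] [CharZero k]

lemma downOp_X_zero : downOp k (X 0) = 0 :=
  mkDerivation_X _ _ _

lemma downOp_X_succ (i : ℕ) : downOp k (X (i + 1)) = X i :=
  mkDerivation_X _ _ _

lemma theta0_eq_sum_antidiagonal (n : ℕ) :
    theta0 k n = ∑ p ∈ antidiagonal n, (-1 : k) ^ p.1 • (X p.1 * X p.2) := by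
  rw [theta0, ← Nat.sum_antidiagonal_eq_sum_range_succ (fun i j => (-1) ^ i * X i * X j)]
  refine sum_congr rfl fun p _ => ?_
  rw [smul_eq_C_mul, map_pow, map_neg, map_one, mul_assoc]

lemma downOp_theta0 (n : ℕ) : downOp k (theta0 k n) = 0 := by
  rw [theta0_eq_sum_antidiagonal, map_sum]
  simp only [Derivation.map_smul, Derivation.leibniz, smul_eq_mul, smul_add]
  rcases n with _ | n
  · simp [downOp_X_zero]
  · rw [sum_add_distrib, Nat.sum_antidiagonal_succ', Nat.sum_antidiagonal_succ]
    simp only [downOp_X_zero, downOp_X_succ, mul_zero, smul_zero, zero_add, pow_succ,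
      ← sum_add_distrib]
    refine sum_eq_zero fun p _ => ?_
    rw [mul_comm (X p.2), mul_neg_one, neg_smul, add_neg_cancel]

lemma eval_theta0_double (m : ℕ) :
    eval (Pi.single m 1) (theta0 k (m + m)) = (-1) ^ m := by
  rw [theta0_eq_sum_antidiagonal, map_sum, sum_eq_single (m, m)]
  · simp
  · rintro ⟨i, j⟩ - hne
    rcases not_and_or.mp (mt Prod.ext_iff.mpr hne) with hi | hj
    · simp [Pi.single_apply, hi]
    · simp [Pi.single_apply, hj]
  · simp

end

/-- For each even `n ≥ 0`, `θₙ⁽⁰⁾` lies in `ker Δ` and is nonzero. -/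
theorem theta0_mem_ker_downOp (k : Type*) [Field k] [CharZero k] :
    ∀ n : ℕ, Even n → downOp k (theta0 k n) = 0 ∧ theta0 k n ≠ 0 := by
  rintro n ⟨m, rfl⟩
  refine ⟨downOp_theta0 _, fun h => ?_⟩
  have := eval_theta0_double (k := k) m
  rw [h, map_zero] at this
  exact pow_ne_zero m (neg_ne_zero.mpr one_ne_zero) this.symm
end

section
/- For every even n ≥ 0 and every j ≥ 1, the element βₙ⁽ʲ⁾ = Σ_{i=j}^{n+j} (-1)^{j+i} C(i,j) xᵢ x_{n+j-i} satisfies Δβₙ⁽ʲ⁾ = βₙ⁽ʲ⁻¹⁾, where Δ is the down operator; in particular βₙ⁽⁰⁾ = Σ_{i=0}^{n}(-1)ⁱxᵢx_{n-i} lies in ker Δ, so (βₙ⁽ʲ⁾)_{j≥0} is a Δ-cable. -/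
open MvPolynomial

/-- `βₙ⁽ʲ⁾ = Σ_{i=j}^{n+j} (-1)^{j+i} C(i,j) xᵢ x_{n+j-i}`. -/
noncomputable def betaCable (k : Type*) [Field k] [CharZero k] (n j : ℕ) : MvPolynomial ℕ k :=
  ∑ i ∈ Finset.Icc j (n + j),
    (-1 : MvPolynomial ℕ k) ^ (j + i) * ((i.choose j : ℕ) : MvPolynomial ℕ k) *
      X i * X (n + j - i)

/-!
Write `βₙ⁽ʲ⁾ = Σ_{a+b=n+j} (-1)^(j+a) C(a,j) xₐ x_b`; the terms with `a < j` vanish because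
`C(a,j) = 0`. By the Leibniz rule, `Δ` sends `Σ_{a+b=m+1} f(a) xₐ x_b` to
`Σ_{a+b=m} (f(a+1) + f(a)) xₐ x_b`. For the coefficients of `βₙ⁽ʲ⁺¹⁾` this is Pascal's rule
`C(a+1,j+1) - C(a,j+1) = C(a,j)`, and for `j = 0` the coefficients `(-1)^(a+1) + (-1)^a` cancel.
-/

open Finset

section

variable {k : Type*} [Field k] [CharZero k]

lemma downOp_sum_antidiagonal_succ (f : ℕ → k) (m : ℕ) :
    downOp k (∑ p ∈ antidiagonal (m + 1), f p.1 • (X p.1 * X p.2))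
      = ∑ p ∈ antidiagonal m, (f (p.1 + 1) + f p.1) • (X p.1 * X p.2) := by
  have leibniz (a b : ℕ) : downOp k (f a • (X a * X b))
      = f a • (downOp k (X a) * X b) + f a • (X a * downOp k (X b)) := by
    rw [Derivation.map_smul, Derivation.leibniz, smul_eq_mul, smul_eq_mul, ← smul_add, add_comm,
      mul_comm (X b)]
  simp only [map_sum, leibniz, sum_add_distrib, add_smul]
  rw [Nat.sum_antidiagonal_succ, Nat.sum_antidiagonal_succ']
  simp [downOp_X_succ, downOp_X_zero]

lemma betaCable_eq_sum_antidiagonal (n j : ℕ) :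
    betaCable k n j = ∑ p ∈ antidiagonal (n + j),
      ((-1) ^ (j + p.1) * (p.1.choose j : k)) • (X p.1 * X p.2) := by
  rw [Nat.sum_antidiagonal_eq_sum_range_succ_mk, betaCable]
  refine sum_subset (fun i hi => ?_) (fun i hi hij => ?_) |>.trans (sum_congr rfl fun i _ => ?_)
  · simp only [mem_Icc, mem_range] at hi ⊢
    omega
  · simp only [mem_range, mem_Icc] at hi hij
    simp [Nat.choose_eq_zero_of_lt (by omega : i < j)]
  · simp [smul_eq_C_mul, mul_assoc]

lemma betaCable_zero (n : ℕ) : betaCable k n 0 = theta0 k n := by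
  simp [betaCable, theta0, Nat.range_succ_eq_Icc_zero]

lemma downOp_betaCable_succ (n j : ℕ) :
    downOp k (betaCable k n (j + 1)) = betaCable k n j := by
  rw [betaCable_eq_sum_antidiagonal, ← add_assoc,
    downOp_sum_antidiagonal_succ (fun a => (-1) ^ (j + 1 + a) * (a.choose (j + 1) : k)),
    betaCable_eq_sum_antidiagonal]
  refine sum_congr rfl fun p _ => ?_
  rw [Nat.choose_succ_succ', Nat.cast_add]
  ring_nf

lemma downOp_betaCable_zero (n : ℕ) : downOp k (betaCable k n 0) = 0 := by
  rw [betaCable_eq_sum_antidiagonal, add_zero]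
  cases n with
  | zero => simp [downOp_X_zero]
  | succ m =>
    rw [downOp_sum_antidiagonal_succ (fun a => (-1) ^ (0 + a) * (a.choose 0 : k))]
    refine sum_eq_zero fun p _ => ?_
    simp [pow_succ]

end

/-- `(βₙ⁽ʲ⁾)_{j ≥ 0}` is a `Δ`-cable rooted at `θₙ⁽⁰⁾`: `Δ βₙ⁽ʲ⁾ = βₙ⁽ʲ⁻¹⁾` for `j ≥ 1`,
and `βₙ⁽⁰⁾ = θₙ⁽⁰⁾ ∈ ker Δ`. -/
theorem betaCable_is_cable (k : Type*) [Field k] [CharZero k] :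
    ∀ n : ℕ, Even n →
      (∀ j : ℕ, downOp k (betaCable k n (j + 1)) = betaCable k n j) ∧
      betaCable k n 0 = theta0 k n ∧ downOp k (betaCable k n 0) = 0 :=
  fun n _ => ⟨downOp_betaCable_succ n, betaCable_zero n, downOp_betaCable_zero n⟩
end

section
/- The subring S = k[x, xv, xv², ...] of the polynomial ring k[x,v] is not finitely generated as a k-algebra. -/
/-!
For `N : ℕ`, the polynomials all of whose monomials `x^a v^b` satisfy `b ≤ N a` form a
subalgebra `A_N` of `k[x,v]`, because the exponent condition is additive. The `A_N` increase
with `N` and `x v^n ∈ A_N` exactly when `n ≤ N`, so `S ≤ ⨆ N, A_N`. A finitely generated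
subalgebra of a directed union lies in one member, but `x v^(N+1) ∈ S` is not in `A_N`.
-/

open MvPolynomial

theorem Subalgebra.FG.exists_le_of_le_iSup {R A ι : Type*} [CommSemiring R] [Semiring A]
    [Algebra R A] [Nonempty ι] {K : ι → Subalgebra R A} (hK : Directed (· ≤ ·) K)
    {S : Subalgebra R A} (hS : S.FG) (hSK : S ≤ ⨆ i, K i) : ∃ i, S ≤ K i := by
  classical
  obtain ⟨t, rfl⟩ := hS
  have hmem : ∀ x ∈ t, ∃ i, x ∈ K i := fun x hx =>
    Set.mem_iUnion.1 (coe_iSup_of_directed hK ▸ hSK (Algebra.subset_adjoin hx))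
  choose! f hf using hmem
  obtain ⟨j, hj⟩ := hK.finset_le (t.image f)
  exact ⟨j, Algebra.adjoin_le fun x hx => hj (f x) (Finset.mem_image_of_mem f hx) (hf x hx)⟩

namespace MvPolynomial

variable (R : Type*) [CommSemiring R] {σ : Type*}

noncomputable def restrictSupportSubalgebra (M : AddSubmonoid (σ →₀ ℕ)) :
    Subalgebra R (MvPolynomial σ R) :=
  (restrictSupport R (M : Set (σ →₀ ℕ))).toSubalgebra
    (by rw [← C_1, C_apply, monomial_mem_restrictSupport]; exact Or.inl M.zero_mem)
    (fun p q hp hq => by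
      classical
      intro m hm
      obtain ⟨a, ha, b, hb, rfl⟩ := Finset.mem_add.mp (support_mul p q hm)
      exact M.add_mem (hp ha) (hq hb))

variable {R}

theorem restrictSupportSubalgebra_mono {M M' : AddSubmonoid (σ →₀ ℕ)} (h : M ≤ M') :
    restrictSupportSubalgebra R M ≤ restrictSupportSubalgebra R M' :=
  restrictSupport_mono R h

def exponentCone (i j : σ) (N : ℕ) : AddSubmonoid (σ →₀ ℕ) where
  carrier := {m | m j ≤ N * m i}
  add_mem' {a b} ha hb := show a j + b j ≤ N * (a i + b i) from
    (mul_add N (a i) (b i)).symm ▸ add_le_add ha hb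
  zero_mem' := Nat.zero_le _

@[simp]
theorem mem_exponentCone {i j : σ} {N : ℕ} {m : σ →₀ ℕ} :
    m ∈ exponentCone i j N ↔ m j ≤ N * m i :=
  Iff.rfl

variable (R) in
noncomputable def coneSubalgebra (i j : σ) (N : ℕ) : Subalgebra R (MvPolynomial σ R) :=
  restrictSupportSubalgebra R (exponentCone i j N)

theorem coneSubalgebra_mono (i j : σ) : Monotone (coneSubalgebra R i j) :=
  fun _ _ hNN' =>
    restrictSupportSubalgebra_mono fun _ hm => le_trans hm (Nat.mul_le_mul_right _ hNN')

theorem X_mul_X_pow_mem_coneSubalgebra_iff [Nontrivial R] {i j : σ} (hij : i ≠ j) (n N : ℕ) :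
    X i * X j ^ n ∈ coneSubalgebra R i j N ↔ n ≤ N := by
  rw [X_pow_eq_monomial, X, monomial_mul, one_mul]
  change monomial _ 1 ∈ restrictSupport R _ ↔ _
  simp [monomial_mem_restrictSupport, hij, hij.symm]

end MvPolynomial

theorem S_not_finitely_generated_general (k : Type*) [Field k] :
    ¬ (Algebra.adjoin k
        {p : MvPolynomial (Fin 2) k | ∃ i : ℕ, p = X 0 * X 1 ^ i}).FG := by
  intro hS
  let A := coneSubalgebra k (0 : Fin 2) 1
  have hSA : Algebra.adjoin k {p | ∃ i : ℕ, p = X 0 * X 1 ^ i} ≤ ⨆ N, A N := by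
    refine Algebra.adjoin_le ?_
    rintro _ ⟨n, rfl⟩
    exact le_iSup A n ((X_mul_X_pow_mem_coneSubalgebra_iff zero_ne_one n n).2 le_rfl)
  obtain ⟨N, hN⟩ := hS.exists_le_of_le_iSup (coneSubalgebra_mono 0 1).directed_le hSA
  have hmem := hN (Algebra.subset_adjoin ⟨N + 1, rfl⟩)
  exact Nat.not_succ_le_self N ((X_mul_X_pow_mem_coneSubalgebra_iff zero_ne_one _ N).1 hmem)

/-- The subring `S = k[x, xv, xv², ...]` of `k[x,v]` is not a finitely generated
`k`-algebra. -/
theorem S_not_finitely_generated (k : Type*) [Field k] [CharZero k] :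
    ¬ (Algebra.adjoin k
        {p : MvPolynomial (Fin 2) k | ∃ i : ℕ, p = X 0 * X 1 ^ i}).FG :=
  S_not_finitely_generated_general k
end

section
/- The partial derivative ∂/∂v on k[x,v] restricts to a locally nilpotent derivation D of the subring S = k[x, xv, xv², ...], and the sequence sₙ = xvⁿ/n! is an infinite D-cable with S = k[s₀, s₁, s₂, ...]; hence S is a simple cable algebra over k of transcendence degree 2. -/
/-!
`∂/∂v` sends `sₙ₊₁` to `sₙ` and `s₀ = x` to `0`, so it preserves the algebra generated by the
cable, and this algebra is `S` because `x vⁿ = n! sₙ`. It is locally nilpotent on all of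
`k[x,v]`, since each application lowers the `v`-degree. For the transcendence degree, `S` sits
inside `k[x,v]`, which has transcendence degree 2, and contains `x` and `xv`, over which `k[x,v]`
is algebraic because `v = xv / x`.
-/

open MvPolynomial

/-- The cable elements `sₙ = x vⁿ / n!` in `k[x,v]`. -/
noncomputable def sCable (k : Type*) [Field k] [CharZero k] (n : ℕ) :
    MvPolynomial (Fin 2) k :=
  C ((n.factorial : k)⁻¹) * X 0 * X 1 ^ n

open Algebra Set Cardinal Nat

theorem Derivation.map_mem_adjoin {R A : Type*} [CommSemiring R] [CommSemiring A]
    [Algebra R A] (D : Derivation R A A) {s : Set A} (hs : ∀ a ∈ s, D a ∈ adjoin R s) {a : A}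
    (ha : a ∈ adjoin R s) : D a ∈ adjoin R s := by
  induction ha using adjoin_induction with
  | mem a ha => exact hs a ha
  | algebraMap r => simp
  | add a b _ _ iha ihb => rw [map_add]; exact add_mem iha ihb
  | mul a b ha hb iha ihb =>
    rw [Derivation.leibniz, smul_eq_mul, smul_eq_mul]
    exact add_mem (mul_mem ha ihb) (mul_mem hb iha)

namespace MvPolynomial

section CommSemiring

variable {R σ : Type*} [CommSemiring R]

theorem add_le_degreeOf_of_coeff_pderiv_iterate_ne_zero (i : σ) (p : MvPolynomial σ R)
    (n : ℕ) {m : σ →₀ ℕ} (hm : coeff m ((pderiv i)^[n] p) ≠ 0) :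
    m i + n ≤ degreeOf i p := by
  classical
  induction n generalizing m with
  | zero => exact monomial_le_degreeOf i (mem_support_iff.2 hm)
  | succ n ih =>
    rw [Function.iterate_succ_apply', coeff_pderiv] at hm
    have := ih (left_ne_zero_of_mul hm)
    simp only [Finsupp.add_apply, Finsupp.single_eq_same] at this
    omega

theorem pderiv_iterate_degreeOf_succ (i : σ) (p : MvPolynomial σ R) :
    (pderiv i)^[degreeOf i p + 1] p = 0 := by
  ext m
  by_contra hm
  have := add_le_degreeOf_of_coeff_pderiv_iterate_ne_zero i p _ hm
  omega

theorem pderiv_X_zero_mul_X_one_pow_succ (n : ℕ) :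
    pderiv 1 (X 0 * X 1 ^ (n + 1) : MvPolynomial (Fin 2) R) = (n + 1) • (X 0 * X 1 ^ n) := by
  rw [pderiv_mul, pderiv_X_of_ne (by decide), pderiv_pow, pderiv_X_self, nsmul_eq_mul]
  push_cast
  ring

end CommSemiring

section IsDomain

variable {R : Type*} [CommRing R] [IsDomain R]

theorem not_algebraicIndependent_subalgebra_of_lt {n m : ℕ} (h : n < m)
    (S : Subalgebra R (MvPolynomial (Fin n) R)) (t : Fin m → S) : ¬ AlgebraicIndependent R t := by
  intro ht
  have := ht.lift_cardinalMk_le_trdeg.trans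
    (lift_le.2 (trdeg_le_of_injective S.val Subtype.val_injective))
  simp at this
  omega

instance isAlgebraic_adjoin_X_zero_X_zero_mul_X_one :
    Algebra.IsAlgebraic (adjoin R (range ![(X 0 : MvPolynomial (Fin 2) R), X 0 * X 1]))
      (MvPolynomial (Fin 2) R) := by
  set B := adjoin R (range ![(X 0 : MvPolynomial (Fin 2) R), X 0 * X 1])
  have hx : IsAlgebraic B (X 0 : MvPolynomial (Fin 2) R) :=
    isAlgebraic_algebraMap (⟨X 0, subset_adjoin ⟨0, rfl⟩⟩ : B)
  have hxv : IsAlgebraic B (X 0 * X 1 : MvPolynomial (Fin 2) R) :=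
    isAlgebraic_algebraMap (⟨X 0 * X 1, subset_adjoin ⟨1, rfl⟩⟩ : B)
  have hv : IsAlgebraic B (X 1 : MvPolynomial (Fin 2) R) :=
    hx.of_mul (mem_nonZeroDivisors_of_ne_zero (X_ne_zero 0)) hxv
  have htop : ⊤ ≤ (Subalgebra.algebraicClosure B (MvPolynomial (Fin 2) R)).restrictScalars R := by
    rw [← adjoin_range_X, adjoin_le_iff]
    rintro _ ⟨i, rfl⟩
    fin_cases i
    exacts [hx, hv]
  exact ⟨fun p => htop (Algebra.mem_top (x := p))⟩

theorem algebraicIndependent_X_zero_X_zero_mul_X_one :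
    AlgebraicIndependent R ![(X 0 : MvPolynomial (Fin 2) R), X 0 * X 1] :=
  (Algebra.IsAlgebraic.isTranscendenceBasis_of_lift_le_trdeg_of_finite R _ (by simp)).1

end IsDomain

end MvPolynomial

section Cable

variable (k : Type*) [Field k] [CharZero k]

theorem sCable_zero : sCable k 0 = X 0 := by
  simp [sCable]

theorem sCable_eq_smul (n : ℕ) : sCable k n = (n ! : k)⁻¹ • (X 0 * X 1 ^ n) := by
  rw [smul_eq_C_mul, sCable, mul_assoc]

theorem X_zero_mul_X_one_pow_eq_smul (n : ℕ) :
    (X 0 * X 1 ^ n : MvPolynomial (Fin 2) k) = (n ! : k) • sCable k n := by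
  rw [sCable_eq_smul, smul_smul, mul_inv_cancel₀ (by exact_mod_cast n.factorial_ne_zero), one_smul]

theorem pderiv_sCable_zero : pderiv 1 (sCable k 0) = 0 := by
  rw [sCable_zero, pderiv_X_of_ne (by decide)]

theorem pderiv_sCable_succ (n : ℕ) : pderiv 1 (sCable k (n + 1)) = sCable k n := by
  rw [sCable_eq_smul, sCable_eq_smul, Derivation.map_smul, pderiv_X_zero_mul_X_one_pow_succ,
    ← Nat.cast_smul_eq_nsmul k, smul_smul]
  congr 1
  push_cast [factorial_succ]
  field_simp

theorem X_zero_mul_X_one_pow_mem_adjoin_sCable (n : ℕ) :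
    X 0 * X 1 ^ n ∈ adjoin k (range (sCable k)) := by
  rw [X_zero_mul_X_one_pow_eq_smul]
  exact Subalgebra.smul_mem _ (subset_adjoin (mem_range_self n)) _

theorem adjoin_X_zero_mul_X_one_pow_eq_adjoin_sCable :
    adjoin k {p : MvPolynomial (Fin 2) k | ∃ i : ℕ, p = X 0 * X 1 ^ i} =
      adjoin k (range (sCable k)) := by
  refine le_antisymm (adjoin_le ?_) (adjoin_le ?_)
  · rintro _ ⟨i, rfl⟩
    exact X_zero_mul_X_one_pow_mem_adjoin_sCable k i
  · rintro _ ⟨i, rfl⟩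
    rw [sCable_eq_smul]
    refine Subalgebra.smul_mem _ ?_ _
    exact subset_adjoin ⟨i, rfl⟩

theorem pderiv_mem_adjoin_sCable {p : MvPolynomial (Fin 2) k}
    (hp : p ∈ adjoin k (range (sCable k))) : pderiv 1 p ∈ adjoin k (range (sCable k)) := by
  refine (pderiv 1).map_mem_adjoin ?_ hp
  rintro _ ⟨_ | n, rfl⟩
  · rw [pderiv_sCable_zero]
    exact zero_mem _
  · rw [pderiv_sCable_succ]
    exact subset_adjoin (mem_range_self n)

end Cable

/-- `∂/∂v` restricts to a locally nilpotent derivation `D` of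
`S = k[x, xv, xv², ...]`, the sequence `sₙ = x vⁿ / n!` is an infinite `D`-cable generating
`S`, and `S` has transcendence degree 2 over `k`; hence `S` is a simple cable algebra. -/
theorem S_simple_cable_algebra (k : Type*) [Field k] [CharZero k] :
    letI S := Algebra.adjoin k {p : MvPolynomial (Fin 2) k | ∃ i : ℕ, p = X 0 * X 1 ^ i}
    -- ∂/∂v restricts to S
    (∀ p ∈ S, pderiv (1 : Fin 2) p ∈ S) ∧
    -- the restriction is locally nilpotent
    (∀ p ∈ S, ∃ n : ℕ, (fun q => pderiv (1 : Fin 2) q)^[n] p = 0) ∧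
    -- (sₙ) is a D-cable rooted at s₀ = x ≠ 0 ...
    sCable k 0 ≠ 0 ∧ pderiv (1 : Fin 2) (sCable k 0) = 0 ∧
    (∀ n : ℕ, sCable k n ∈ S) ∧
    (∀ n : ℕ, pderiv (1 : Fin 2) (sCable k (n + 1)) = sCable k n) ∧
    -- ... which is infinite: every vertex is in D(S)
    (∀ n : ℕ, ∃ q ∈ S, pderiv (1 : Fin 2) q = sCable k n) ∧
    -- S is generated by the vertices of the cable
    S = Algebra.adjoin k (Set.range (sCable k)) ∧
    -- S has transcendence degree 2 over k
    (∃ t : Fin 2 → S, AlgebraicIndependent k t) ∧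
    (∀ t : Fin 3 → S, ¬ AlgebraicIndependent k t) := by
  rw [adjoin_X_zero_mul_X_one_pow_eq_adjoin_sCable]
  set S := adjoin k (range (sCable k))
  have hmem (n : ℕ) : sCable k n ∈ S := subset_adjoin (mem_range_self n)
  have hx_xv : ∀ i, ![(X 0 : MvPolynomial (Fin 2) k), X 0 * X 1] i ∈ S := Fin.forall_fin_two.2
    ⟨sCable_zero k ▸ hmem 0, by simpa using X_zero_mul_X_one_pow_mem_adjoin_sCable k 1⟩
  refine ⟨fun p => pderiv_mem_adjoin_sCable k, fun p _ => ⟨_, pderiv_iterate_degreeOf_succ 1 p⟩,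
    by simp [sCable_zero, X_ne_zero], pderiv_sCable_zero k, hmem, pderiv_sCable_succ k,
    fun n => ⟨_, hmem (n + 1), pderiv_sCable_succ k n⟩, rfl, ?_, ?_⟩
  · exact ⟨_, (algebraicIndependent_X_zero_X_zero_mul_X_one (R := k)).of_comp
      (x := fun i => (⟨_, hx_xv i⟩ : S)) S.val⟩
  · exact not_algebraicIndependent_subalgebra_of_lt (by norm_num) S
end

section
/- Let B = k[a,x,y,z,v] be a polynomial ring in five variables and D the derivation with Dz = y, Dy = x, Dx = a³, Dv = a², Da = 0. Then D is locally nilpotent, and the elements F = 2a³y − x², G = 3a⁶z − 3a³xy + x³, and h = 9a⁶z² − 18a³xyz + 8a³y³ + 6x³z − 3x²y² all lie in ker D, with a⁶h = F³ + G². -/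
/-!
The elements killed by some power of a derivation form a subalgebra (by the Leibniz rule), so
local nilpotency of `D` only has to be checked on the variables, on which `D` is triangular:
`a ↦ 0`, `x ↦ a³`, `y ↦ x`, `z ↦ y`, `v ↦ a²`. The kernel memberships and the identity
`a⁶ h = F³ + G²` are direct computations.
-/

open MvPolynomial

/-- The derivation `D` of `B = k[a,x,y,z,v]` (variables `a = X 0`, `x = X 1`, `y = X 2`,
`z = X 3`, `v = X 4`) with `Dz = y`, `Dy = x`, `Dx = a³`, `Dv = a²`, `Da = 0`. -/
noncomputable def dimFiveDer (k : Type*) [Field k] [CharZero k] :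
    Derivation k (MvPolynomial (Fin 5) k) (MvPolynomial (Fin 5) k) :=
  MvPolynomial.mkDerivation k ![0, X 0 ^ 3, X 1, X 2, X 0 ^ 2]

/-- `F = 2a³y − x²`. -/
noncomputable def Fpoly (k : Type*) [Field k] [CharZero k] : MvPolynomial (Fin 5) k :=
  2 * X 0 ^ 3 * X 2 - X 1 ^ 2

/-- `G = 3a⁶z − 3a³xy + x³`. -/
noncomputable def Gpoly (k : Type*) [Field k] [CharZero k] : MvPolynomial (Fin 5) k :=
  3 * X 0 ^ 6 * X 3 - 3 * X 0 ^ 3 * X 1 * X 2 + X 1 ^ 3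

/-- `h = 9a⁶z² − 18a³xyz + 8a³y³ + 6x³z − 3x²y²`. -/
noncomputable def hpoly (k : Type*) [Field k] [CharZero k] : MvPolynomial (Fin 5) k :=
  9 * X 0 ^ 6 * X 3 ^ 2 - 18 * X 0 ^ 3 * X 1 * X 2 * X 3 + 8 * X 0 ^ 3 * X 2 ^ 3 +
    6 * X 1 ^ 3 * X 3 - 3 * X 1 ^ 2 * X 2 ^ 2

namespace Derivation

variable {R A : Type*} [CommSemiring R] [CommSemiring A] [Algebra R A] (D : Derivation R A A)

@[simp] theorem map_ofNat (n : ℕ) [n.AtLeastTwo] : D (ofNat(n) : A) = 0 :=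
  D.map_natCast n

variable {D}

theorem iterate_eq_zero_of_le {b : A} {m n : ℕ} (hb : D^[m] b = 0) (h : m ≤ n) :
    D^[n] b = 0 := by
  obtain ⟨j, rfl⟩ := Nat.exists_eq_add_of_le h
  rw [add_comm, Function.iterate_add_apply, hb, iterate_map_zero]

theorem iterate_add_mul_eq_zero {p q : A} {m l : ℕ} (hp : D^[m] p = 0) (hq : D^[l] q = 0) :
    D^[m + l] (p * q) = 0 := by
  induction m generalizing p q l with
  | zero => simp_all
  | succ m ihm =>
    induction l generalizing q with
    | zero => simp_all [iterate_map_zero]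
    | succ l ihl =>
      have hpq : D (p * q) = p * D q + D p * q := by
        rw [D.leibniz, smul_eq_mul, smul_eq_mul, mul_comm q]
      have hDq : D^[l] (D q) = 0 := by rwa [← Function.iterate_succ_apply]
      have hDp : D^[m] (D p) = 0 := by rwa [← Function.iterate_succ_apply]
      rw [← add_assoc, Function.iterate_succ_apply, hpq, iterate_map_add, ihl hDq,
        Nat.add_right_comm m 1 l, add_assoc, ihm hDp hq, add_zero]

variable (D)

/-- `D` is locally nilpotent iff this subalgebra is `⊤`. -/
def nilSubalgebra : Subalgebra R A where
  carrier := {b | ∃ n, D^[n] b = 0}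
  mul_mem' := fun ⟨_, hm⟩ ⟨_, hl⟩ => ⟨_, iterate_add_mul_eq_zero hm hl⟩
  add_mem' := fun ⟨m, hm⟩ ⟨l, hl⟩ => ⟨max m l, by
    rw [iterate_map_add, iterate_eq_zero_of_le hm (le_max_left m l),
      iterate_eq_zero_of_le hl (le_max_right m l), add_zero]⟩
  algebraMap_mem' r := ⟨1, D.map_algebraMap r⟩

variable {D}

theorem mem_nilSubalgebra {b : A} : b ∈ D.nilSubalgebra ↔ ∃ n, D^[n] b = 0 := Iff.rfl

theorem mem_nilSubalgebra_of_apply_eq_zero {b : A} (h : D b = 0) : b ∈ D.nilSubalgebra :=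
  ⟨1, h⟩

theorem mem_nilSubalgebra_of_apply_mem {b : A} (h : D b ∈ D.nilSubalgebra) :
    b ∈ D.nilSubalgebra :=
  let ⟨n, hn⟩ := h
  ⟨n + 1, hn⟩

end Derivation

theorem MvPolynomial.nilSubalgebra_eq_top {R σ : Type*} [CommSemiring R]
    {D : Derivation R (MvPolynomial σ R) (MvPolynomial σ R)}
    (h : ∀ i, X i ∈ D.nilSubalgebra) : D.nilSubalgebra = ⊤ :=
  eq_top_iff.2 <| adjoin_range_X (R := R) ▸ Algebra.adjoin_le (Set.range_subset_iff.2 h)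

section dimFiveDer

variable (k : Type*) [Field k] [CharZero k]

@[simp] theorem dimFiveDer_X (i : Fin 5) :
    dimFiveDer k (X i) = ![0, X 0 ^ 3, X 1, X 2, X 0 ^ 2] i :=
  mkDerivation_X k _ i

theorem dimFiveDer_X_mem_nilSubalgebra (i : Fin 5) : X i ∈ (dimFiveDer k).nilSubalgebra := by
  have ha : X 0 ∈ (dimFiveDer k).nilSubalgebra :=
    Derivation.mem_nilSubalgebra_of_apply_eq_zero (by simp)
  have hx : X 1 ∈ (dimFiveDer k).nilSubalgebra :=
    Derivation.mem_nilSubalgebra_of_apply_mem (by simpa using pow_mem ha 3)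
  have hy : X 2 ∈ (dimFiveDer k).nilSubalgebra :=
    Derivation.mem_nilSubalgebra_of_apply_mem (by simpa using hx)
  fin_cases i
  · exact ha
  · exact hx
  · exact hy
  · exact Derivation.mem_nilSubalgebra_of_apply_mem (by simpa using hy)
  · exact Derivation.mem_nilSubalgebra_of_apply_mem (by simpa using pow_mem ha 2)

theorem dimFiveDer_Fpoly : dimFiveDer k (Fpoly k) = 0 := by
  simp only [Fpoly, map_sub, Derivation.map_ofNat, Derivation.leibniz, Derivation.leibniz_pow,
    dimFiveDer_X, Matrix.cons_val, smul_eq_mul, nsmul_eq_mul]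
  ring

theorem dimFiveDer_Gpoly : dimFiveDer k (Gpoly k) = 0 := by
  simp only [Gpoly, map_add, map_sub, Derivation.map_ofNat, Derivation.leibniz,
    Derivation.leibniz_pow, dimFiveDer_X, Matrix.cons_val, smul_eq_mul, nsmul_eq_mul]
  ring

theorem dimFiveDer_hpoly : dimFiveDer k (hpoly k) = 0 := by
  simp only [hpoly, map_add, map_sub, Derivation.map_ofNat, Derivation.leibniz,
    Derivation.leibniz_pow, dimFiveDer_X, Matrix.cons_val, smul_eq_mul, nsmul_eq_mul]
  ring

end dimFiveDer

/-- `D` is locally nilpotent, `F`, `G`, `h` lie in `ker D`, and `a⁶ h = F³ + G²`. -/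
theorem dimFiveDer_properties (k : Type*) [Field k] [CharZero k] :
    (∀ b : MvPolynomial (Fin 5) k, ∃ n : ℕ, (⇑(dimFiveDer k))^[n] b = 0) ∧
    dimFiveDer k (Fpoly k) = 0 ∧ dimFiveDer k (Gpoly k) = 0 ∧ dimFiveDer k (hpoly k) = 0 ∧
    X 0 ^ 6 * hpoly k = Fpoly k ^ 3 + Gpoly k ^ 2 := by
  have hD : (dimFiveDer k).nilSubalgebra = ⊤ :=
    nilSubalgebra_eq_top (dimFiveDer_X_mem_nilSubalgebra k)
  refine ⟨fun b => ?_, dimFiveDer_Fpoly k, dimFiveDer_Gpoly k, dimFiveDer_hpoly k, ?_⟩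
  · rw [← Derivation.mem_nilSubalgebra, hD]
    exact Algebra.mem_top
  · simp only [Fpoly, Gpoly, hpoly]
    ring
end
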